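/- arXiv:quant-ph/0605218 — 3 statements merged into one kernel-verified Lean document; each statement's English description precedes it below -/
import Mathlib

section
/- Let U be a unitary operator on a finite-dimensional complex Hilbert space H, and P an orthogonal projection on H. If |i⟩ is a unit eigenvector of PUP with eigenvalue λ satisfying |λ| = 1, then P|i⟩ = |i⟩, |i⟩ is an eigenvector of U with eigenvalue of unit modulus, and (I − P)U|i⟩ = 0. -/
/-! An eigenvector of `PUP` with eigenvalue `λ ≠ 0` lies in the range of `P`, so
`‖PUi‖ = |λ| ‖i‖ = ‖i‖ = ‖Ui‖`; an orthogonal projection preserves the norm only of vectors in its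
range, hence `PUi = Ui`, i.e. `Ui = λ i`. -/

open ContinuousLinearMap

theorem IsIdempotentElem.apply_eq_self_of_apply_eq_smul {R M : Type*} [DivisionRing R]
    [TopologicalSpace M] [AddCommGroup M] [Module R M]
    {p : M →L[R] M} (hp : IsIdempotentElem p) {x y : M} {c : R} (hc : c ≠ 0)
    (h : p y = c • x) : p x = x := by
  refine smul_right_injective M hc ?_
  simp only [← map_smul, ← h]
  exact congr($hp y)

theorem IsStarProjection.apply_eq_self_of_norm_apply_eq {𝕜 E : Type*} [RCLike 𝕜]
    [NormedAddCommGroup E] [InnerProductSpace 𝕜 E] [CompleteSpace E] {p : E →L[𝕜] E}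
    (hp : IsStarProjection p) {v : E} (hv : ‖p v‖ = ‖v‖) : p v = v := by
  obtain ⟨K, _, rfl⟩ := isStarProjection_iff_eq_starProjection.mp hp
  exact K.starProjection_eq_self_iff.mpr ((K.mem_iff_norm_starProjection v).mpr hv)

theorem stmt_4_general {H : Type*} [NormedAddCommGroup H] [InnerProductSpace ℂ H]
    [FiniteDimensional ℂ H]
    (U P : H →L[ℂ] H)
    (hU₁ : adjoint U ∘L U = 1)
    (hP : P ∘L P = P) (hPsa : adjoint P = P)
    (i : H) (l : ℂ) (hl : ‖l‖ = 1)
    (heig : (P ∘L U ∘L P) i = l • i) :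
    P i = i ∧ (∃ μ : ℂ, ‖μ‖ = 1 ∧ U i = μ • i) ∧ (1 - P) (U i) = 0 := by
  have hProj : IsStarProjection P := ⟨hP, hPsa⟩
  have hl₀ : l ≠ 0 := by rintro rfl; simp at hl
  have hPi : P i = i := hProj.isIdempotentElem.apply_eq_self_of_apply_eq_smul hl₀ heig
  have hPUi : P (U i) = l • i := by simpa [hPi] using heig
  have hUi : P (U i) = U i := hProj.apply_eq_self_of_norm_apply_eq <| by
    rw [hPUi, norm_smul, hl, one_mul, (norm_map_iff_adjoint_comp_self U).mpr hU₁]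
  exact ⟨hPi, ⟨l, hl, hUi ▸ hPUi⟩, by simp [hUi]⟩

theorem stmt_4 {H : Type*} [NormedAddCommGroup H] [InnerProductSpace ℂ H]
    [FiniteDimensional ℂ H]
    (U P : H →L[ℂ] H)
    (hU₁ : adjoint U ∘L U = 1) (hU₂ : U ∘L adjoint U = 1)
    (hP : P ∘L P = P) (hPsa : adjoint P = P)
    (i : H) (l : ℂ) (hi : ‖i‖ = 1) (hl : ‖l‖ = 1)
    (heig : (P ∘L U ∘L P) i = l • i) :
    P i = i ∧ (∃ μ : ℂ, ‖μ‖ = 1 ∧ U i = μ • i) ∧ (1 - P) (U i) = 0 :=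
  stmt_4_general U P hU₁ hP hPsa i l hl heig
end

section
/- Let U_X = PUP where U is unitary and P an orthogonal projection, and let ρ be a density operator. Then there exists N with U_X^N (PρP) (U_X†)^N = 0 if and only if for every pure state |ψ_i⟩ appearing with positive weight p_i in some ensemble decomposition ρ = Σ_i p_i |ψ_i⟩⟨ψ_i|, there exists N_i with U_X^{N_i} P|ψ_i⟩ = 0. -/
/-!
Writing `ρ = ∑ᵢ pᵢ |ψᵢ⟩⟨ψᵢ|` and `B = A^N P`, self-adjointness of `P` turns the evolved state
into `B ρ Bᴴ = ∑ᵢ pᵢ |Bψᵢ⟩⟨Bψᵢ|`. Its trace is `∑ᵢ pᵢ ‖Bψᵢ‖²`, a sum of nonnegative terms with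
positive weights, so it vanishes iff every `Bψᵢ` does; this gives the forward direction for every
ensemble. Conversely, a positive semidefinite `ρ` of trace one has some ensemble decomposition
(normalize the nonzero vectors of any decomposition `ρ = ∑ⱼ |vⱼ⟩⟨vⱼ|`), and since `A^N v = 0`
persists for larger `N`, a common exponent for its finitely many members works for `ρ`.
-/

open Matrix Filter
open scoped ComplexOrder

variable {m n : Type*} [Fintype n]

lemma Matrix.mul_vecMulVec_star_mul_conjTranspose {α : Type*} [CommSemiring α] [StarRing α]
    (B : Matrix m n α) (v : n → α) :
    B * vecMulVec v (star v) * Bᴴ = vecMulVec (B *ᵥ v) (star (B *ᵥ v)) := by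
  rw [mul_vecMulVec, vecMulVec_mul, star_mulVec]

lemma Matrix.sum_smul_vecMulVec_star_eq_zero_iff {ι : Type*} [Fintype ι] {p : ι → ℝ}
    (hp : ∀ i, 0 < p i) (w : ι → n → ℂ) :
    ∑ i, (p i : ℂ) • vecMulVec (w i) (star (w i)) = 0 ↔ ∀ i, w i = 0 := by
  refine ⟨fun h i => ?_, fun h => by simp [h]⟩
  have htrace : ∑ i, (p i : ℂ) * (star (w i) ⬝ᵥ w i) = 0 := by
    simpa [trace_sum, trace_vecMulVec, dotProduct_comm (w _)] using congrArg trace h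
  have hterm := (Finset.sum_eq_zero_iff_of_nonneg fun j _ =>
    mul_nonneg (Complex.zero_le_real.2 (hp j).le) (dotProduct_star_self_nonneg (w j))).1
      htrace i (Finset.mem_univ i)
  exact dotProduct_star_self_eq_zero.1 <|
    (mul_eq_zero.1 hterm).resolve_left (Complex.ofReal_ne_zero.2 (hp i).ne')

lemma Matrix.mul_mul_conjTranspose_eq_zero_iff [Fintype m] {ι : Type*} [Fintype ι] {p : ι → ℝ}
    (hp : ∀ i, 0 < p i) {ψ : ι → n → ℂ} {ρ : Matrix n n ℂ}
    (hρ : ρ = ∑ i, (p i : ℂ) • vecMulVec (ψ i) (star (ψ i))) (B : Matrix m n ℂ) :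
    B * ρ * Bᴴ = 0 ↔ ∀ i, B *ᵥ ψ i = 0 := by
  rw [hρ, Matrix.mul_sum, Matrix.sum_mul]
  simp only [Matrix.mul_smul, Matrix.smul_mul, mul_vecMulVec_star_mul_conjTranspose]
  exact sum_smul_vecMulVec_star_eq_zero_iff hp _

lemma Matrix.exists_smul_vecMulVec_star_of_ne_zero {v : n → ℂ} (hv : v ≠ 0) :
    ∃ p : ℝ, 0 < p ∧ ∃ ψ : n → ℂ, star ψ ⬝ᵥ ψ = 1 ∧
      (p : ℂ) • vecMulVec ψ (star ψ) = vecMulVec v (star v) := by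
  set p := (star v ⬝ᵥ v).re
  have hv_pos : 0 < star v ⬝ᵥ v := dotProduct_star_self_pos_iff.2 hv
  have hp : 0 < p := (Complex.pos_iff.1 hv_pos).1
  have hnorm : star v ⬝ᵥ v = p :=
    Complex.eq_re_of_ofReal_le (r := 0) (by rw [Complex.ofReal_zero]; exact hv_pos.le)
  set c := (Real.sqrt p)⁻¹
  have hc : (p : ℂ) * c * c = 1 := by
    norm_cast
    rw [mul_assoc, ← mul_inv, Real.mul_self_sqrt hp.le, mul_inv_cancel₀ hp.ne']
  refine ⟨p, hp, (c : ℂ) • v, ?_, ?_⟩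
  · simp only [star_smul, smul_dotProduct, dotProduct_smul, hnorm, smul_eq_mul, Complex.star_def,
      Complex.conj_ofReal]
    linear_combination hc
  · simp only [star_smul, smul_vecMulVec, vecMulVec_smul, smul_smul, Complex.star_def,
      Complex.conj_ofReal]
    rw [← mul_assoc, hc, one_smul]

lemma Fintype.sum_subtype_eq_sum_of_eq_zero {κ M : Type*} [Fintype κ] [AddCommMonoid M]
    (q : κ → Prop) [DecidablePred q] {f : κ → M} (hf : ∀ i, ¬ q i → f i = 0) :
    ∑ i : {i // q i}, f i = ∑ i, f i := by
  rw [← Fintype.sum_subtype_add_sum_subtype q f,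
    Fintype.sum_eq_zero (fun i : {i // ¬ q i} => f i) fun i => hf _ i.2, add_zero]

lemma Matrix.PosSemidef.exists_ensemble {ρ : Matrix n n ℂ} (hρ : ρ.PosSemidef)
    (htr : ρ.trace = 1) :
    ∃ (ι : Type) (_ : Fintype ι) (p : ι → ℝ) (ψ : ι → n → ℂ), (∀ i, 0 < p i) ∧
      ∑ i, p i = 1 ∧ (∀ i, star (ψ i) ⬝ᵥ ψ i = 1) ∧
      ρ = ∑ i, (p i : ℂ) • vecMulVec (ψ i) (star (ψ i)) := by
  classical
  obtain ⟨r, v, rfl⟩ := posSemidef_iff_eq_sum_vecMulVec.1 hρ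
  choose p hp ψ hψ hvψ using fun i : {i // v i ≠ 0} =>
    exists_smul_vecMulVec_star_of_ne_zero i.2
  have hdec : ∑ i, vecMulVec (v i) (star (v i)) =
      ∑ i, (p i : ℂ) • vecMulVec (ψ i) (star (ψ i)) := by
    rw [Finset.sum_congr rfl fun i _ => hvψ i, Fintype.sum_subtype_eq_sum_of_eq_zero
      (fun i => v i ≠ 0) (f := fun i => vecMulVec (v i) (star (v i))) fun i hi => by
        simp [not_not.1 hi]]
  refine ⟨_, inferInstance, p, ψ, hp, ?_, hψ, hdec⟩
  rw [hdec] at htr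
  simp only [trace_sum, trace_smul, trace_vecMulVec, dotProduct_comm (ψ _), hψ, smul_eq_mul,
    mul_one] at htr
  exact_mod_cast htr

lemma Matrix.eventually_pow_mulVec_eq_zero {α : Type*} [CommSemiring α] [DecidableEq n]
    {A : Matrix n n α} {v : n → α} (h : ∃ N, A ^ N *ᵥ v = 0) :
    ∀ᶠ N in atTop, A ^ N *ᵥ v = 0 := by
  obtain ⟨N, hN⟩ := h
  filter_upwards [eventually_ge_atTop N] with M hM
  rw [← Nat.sub_add_cancel hM, pow_add, ← mulVec_mulVec, hN, mulVec_zero]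

theorem stmt_11_general (k : ℕ)
    (P : Matrix (Fin k) (Fin k) ℂ) (hPsa : Pᴴ = P)
    (ρ : Matrix (Fin k) (Fin k) ℂ) (hρ : ρ.PosSemidef) (hρtr : ρ.trace = 1)
    (A : Matrix (Fin k) (Fin k) ℂ) :
    (∃ N : ℕ, A ^ N * (P * ρ * P) * (Aᴴ) ^ N = 0) ↔
      ∀ (ι : Type) [Fintype ι] (p : ι → ℝ) (ψ : ι → Fin k → ℂ),
        (∀ i, 0 < p i) → (∑ i, p i = 1) →
        (∀ i, star (ψ i) ⬝ᵥ ψ i = 1) →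
        (ρ = ∑ i, (p i : ℂ) • Matrix.vecMulVec (ψ i) (star (ψ i))) →
        ∀ i, ∃ N : ℕ, A ^ N *ᵥ (P *ᵥ ψ i) = 0 := by
  have hsandwich (N : ℕ) : A ^ N * (P * ρ * P) * Aᴴ ^ N = (A ^ N * P) * ρ * (A ^ N * P)ᴴ := by
    rw [conjTranspose_mul, hPsa, conjTranspose_pow]
    simp only [Matrix.mul_assoc]
  simp_rw [hsandwich]
  constructor
  · rintro ⟨N, hN⟩ ι _ p ψ hp _ _ hdec i
    exact ⟨N, by rw [mulVec_mulVec]; exact (mul_mul_conjTranspose_eq_zero_iff hp hdec _).1 hN i⟩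
  · intro H
    obtain ⟨ι, _, p, ψ, hp, hpsum, hψ, hdec⟩ := hρ.exists_ensemble hρtr
    obtain ⟨N, hN⟩ := (eventually_all.2 fun i =>
      eventually_pow_mulVec_eq_zero (H ι p ψ hp hpsum hψ hdec i)).exists
    exact ⟨N, (mul_mul_conjTranspose_eq_zero_iff hp hdec _).2 fun i => by
      rw [← mulVec_mulVec]; exact hN i⟩

theorem stmt_11 (k : ℕ) (U : Matrix.unitaryGroup (Fin k) ℂ)
    (P : Matrix (Fin k) (Fin k) ℂ) (hP : P * P = P) (hPsa : Pᴴ = P)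
    (ρ : Matrix (Fin k) (Fin k) ℂ) (hρ : ρ.PosSemidef) (hρtr : ρ.trace = 1)
    (A : Matrix (Fin k) (Fin k) ℂ)
    (hA : A = P * (U : Matrix (Fin k) (Fin k) ℂ) * P) :
    (∃ N : ℕ, A ^ N * (P * ρ * P) * (Aᴴ) ^ N = 0) ↔
      ∀ (ι : Type) [Fintype ι] (p : ι → ℝ) (ψ : ι → Fin k → ℂ),
        (∀ i, 0 < p i) → (∑ i, p i = 1) →
        (∀ i, star (ψ i) ⬝ᵥ ψ i = 1) →
        (ρ = ∑ i, (p i : ℂ) • Matrix.vecMulVec (ψ i) (star (ψ i))) →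
        ∀ i, ∃ N : ℕ, A ^ N *ᵥ (P *ᵥ ψ i) = 0 :=
  stmt_11_general k P hPsa ρ hρ hρtr A
end

section
/- Let A be a normal matrix with spectral decomposition A = Σ_i λ_i |i⟩⟨i| and ρ a positive semidefinite matrix with trace 1. Then lim_{n→∞} tr(A^n ρ (A†)^n) = Σ_{i : |λ_i| = 1} ⟨i|ρ|i⟩. In particular, the limit is 0 if and only if ⟨i|ρ|i⟩ = 0 for all i with |λ_i| = 1. -/
open Matrix Filter Topology
open scoped ComplexOrder

/-!
The rank-one projectors `Pᵢ = |eᵢ⟩⟨eᵢ|` form a complete family of orthogonal idempotents, so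
`Aⁿ = ∑ λᵢⁿ Pᵢ` and `(Aᴴ)ⁿ = ∑ conj(λᵢ)ⁿ Pᵢ`, and by cyclicity of the trace
`tr (Aⁿ ρ (Aᴴ)ⁿ) = ∑ |λᵢ|²ⁿ ⟨eᵢ|ρ|eᵢ⟩`. For `|λᵢ| ≤ 1` the weight `|λᵢ|²ⁿ` tends to `1` or `0`
according as `|λᵢ| = 1` or not. The diagonal entries `⟨eᵢ|ρ|eᵢ⟩` are nonnegative, so their sum
vanishes exactly when each of them does.
-/

namespace CompleteOrthogonalIdempotents

variable {ι S R : Type*} [Fintype ι] [CommSemiring S] [Semiring R] [Algebra S R] {P : ι → R}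

theorem sum_smul_pow (hP : CompleteOrthogonalIdempotents P) (c : ι → S) (n : ℕ) :
    (∑ i, c i • P i) ^ n = ∑ i, c i ^ n • P i := by
  classical
  induction n with
  | zero => simp [hP.complete]
  | succ n ih =>
    simp_rw [pow_succ, ih, Finset.sum_mul_sum, smul_mul_smul_comm, hP.mul_eq, smul_ite,
      smul_zero, Finset.sum_ite_eq, Finset.mem_univ, if_true]

end CompleteOrthogonalIdempotents

theorem OrthogonalIdempotents.trace_sum_smul_mul_mul_sum_smul {ι n α : Type*} [Fintype ι]
    [Fintype n] [DecidableEq n] [CommSemiring α] {P : ι → Matrix n n α}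
    (hP : OrthogonalIdempotents P) (a b : ι → α) (ρ : Matrix n n α) :
    ((∑ i, a i • P i) * ρ * ∑ j, b j • P j).trace = ∑ i, a i * b i * (P i * ρ).trace := by
  classical
  have hterm : ∀ i j, (a i • P i * ρ * b j • P j).trace =
      if j = i then a i * b i * (P i * ρ).trace else 0 := by
    intro i j
    rw [smul_mul_assoc, smul_mul_assoc, mul_smul_comm, smul_smul, trace_smul, trace_mul_cycle,
      hP.mul_eq]
    split_ifs with h
    · subst h; rfl
    · simp
  simp_rw [Finset.sum_mul, Finset.mul_sum, trace_sum, hterm, Finset.sum_ite_eq',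
    Finset.mem_univ, if_true]

section Orthonormal

variable {n α : Type*} [Fintype n] [CommRing α] [StarRing α] {e : n → n → α}

theorem completeOrthogonalIdempotents_vecMulVec_star [DecidableEq n]
    (horth : ∀ i j, star (e i) ⬝ᵥ e j = if i = j then (1 : α) else 0) :
    CompleteOrthogonalIdempotents fun i => vecMulVec (e i) (star (e i)) := by
  refine ⟨⟨fun i => ?_, fun i j hij => ?_⟩, ?_⟩
  · simp [IsIdempotentElem, vecMulVec_mul_vecMulVec, horth]
  · simp [vecMulVec_mul_vecMulVec, horth, hij]
  · -- Columns orthonormal means `Uᴴ U = 1`; for a square matrix this forces `U Uᴴ = 1`.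
    let U : Matrix n n α := of fun a i => e i a
    have hUU : Uᴴ * U = 1 := by
      ext i j
      simpa [U, mul_apply, dotProduct, one_apply] using horth i j
    rw [← mul_eq_one_comm.mp hUU]
    ext a b
    simp [U, Matrix.sum_apply, mul_apply, vecMulVec_apply]

theorem conjTranspose_sum_smul_vecMulVec_star (lam : n → α) :
    (∑ i, lam i • vecMulVec (e i) (star (e i)))ᴴ =
      ∑ i, star (lam i) • vecMulVec (e i) (star (e i)) := by
  simp [conjTranspose_sum, conjTranspose_smul]

theorem trace_vecMulVec_star_mul (v : n → α) (ρ : Matrix n n α) :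
    (vecMulVec v (star v) * ρ).trace = star v ⬝ᵥ (ρ *ᵥ v) := by
  rw [vecMulVec_mul, trace_vecMulVec, dotProduct_mulVec, dotProduct_comm]

theorem trace_pow_mul_mul_conjTranspose_pow [DecidableEq n]
    (horth : ∀ i j, star (e i) ⬝ᵥ e j = if i = j then (1 : α) else 0) {A : Matrix n n α}
    {lam : n → α} (hA : A = ∑ i, lam i • vecMulVec (e i) (star (e i))) (ρ : Matrix n n α)
    (m : ℕ) :
    (A ^ m * ρ * Aᴴ ^ m).trace = ∑ i, (lam i * star (lam i)) ^ m * (star (e i) ⬝ᵥ (ρ *ᵥ e i)) := by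
  have hP := completeOrthogonalIdempotents_vecMulVec_star horth
  rw [hA, conjTranspose_sum_smul_vecMulVec_star, hP.sum_smul_pow, hP.sum_smul_pow,
    hP.toOrthogonalIdempotents.trace_sum_smul_mul_mul_sum_smul]
  simp_rw [trace_vecMulVec_star_mul, mul_pow]

end Orthonormal

theorem Complex.tendsto_mul_conj_pow {z : ℂ} (hz : ‖z‖ ≤ 1) :
    Tendsto (fun n : ℕ => (z * star z) ^ n) atTop (𝓝 (if ‖z‖ = 1 then 1 else 0)) := by
  rw [Complex.star_def, Complex.mul_conj, Complex.normSq_eq_norm_sq]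
  split_ifs with h
  · simp [h]
  · have hlt : ‖((‖z‖ ^ 2 : ℝ) : ℂ)‖ < 1 := by
      rw [Complex.norm_real, Real.norm_of_nonneg (by positivity)]
      nlinarith [norm_nonneg z, lt_of_le_of_ne hz h]
    exact tendsto_pow_atTop_nhds_zero_of_norm_lt_one hlt

theorem tendsto_trace_pow_mul_mul_conjTranspose_pow {n : Type*} [Fintype n] [DecidableEq n]
    {e : n → n → ℂ} (horth : ∀ i j, star (e i) ⬝ᵥ e j = if i = j then (1 : ℂ) else 0)
    {A : Matrix n n ℂ} {lam : n → ℂ} (hA : A = ∑ i, lam i • vecMulVec (e i) (star (e i)))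
    (hcontr : ∀ i, ‖lam i‖ ≤ 1) (ρ : Matrix n n ℂ) :
    Tendsto (fun m : ℕ => (A ^ m * ρ * Aᴴ ^ m).trace) atTop
      (𝓝 (∑ i ∈ Finset.univ.filter fun i => ‖lam i‖ = 1, star (e i) ⬝ᵥ (ρ *ᵥ e i))) := by
  simp_rw [trace_pow_mul_mul_conjTranspose_pow horth hA, Finset.sum_filter]
  refine tendsto_finsetSum _ fun i _ => ?_
  simpa only [ite_mul, one_mul, zero_mul] using
    (Complex.tendsto_mul_conj_pow (hcontr i)).mul_const (star (e i) ⬝ᵥ (ρ *ᵥ e i))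

theorem stmt_17_general (k : ℕ) (A : Matrix (Fin k) (Fin k) ℂ)
    (e : Fin k → Fin k → ℂ) (lam : Fin k → ℂ)
    (horth : ∀ i j, star (e i) ⬝ᵥ e j = if i = j then (1 : ℂ) else 0)
    (hspec : A = ∑ i, lam i • Matrix.vecMulVec (e i) (star (e i)))
    (hcontr : ∀ i, ‖lam i‖ ≤ 1)
    (ρ : Matrix (Fin k) (Fin k) ℂ) (hρ : ρ.PosSemidef) :
    Filter.Tendsto (fun n : ℕ => (A ^ n * ρ * (Aᴴ) ^ n).trace) Filter.atTop
        (nhds (∑ i ∈ Finset.univ.filter fun i => ‖lam i‖ = 1,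
          star (e i) ⬝ᵥ (ρ *ᵥ e i))) ∧
      (Filter.Tendsto (fun n : ℕ => (A ^ n * ρ * (Aᴴ) ^ n).trace) Filter.atTop (nhds 0) ↔
        ∀ i, ‖lam i‖ = 1 → star (e i) ⬝ᵥ (ρ *ᵥ e i) = 0) := by
  have hlim := tendsto_trace_pow_mul_mul_conjTranspose_pow horth hspec hcontr ρ
  refine ⟨hlim, fun h0 i hi => ?_, fun h => ?_⟩
  · have hsum := tendsto_nhds_unique hlim h0
    exact (Finset.sum_eq_zero_iff_of_nonneg fun j _ => hρ.dotProduct_mulVec_nonneg (e j)).mp hsum i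
      (by simpa using hi)
  · rwa [Finset.sum_eq_zero fun i hi => h i (Finset.mem_filter.mp hi).2] at hlim

theorem stmt_17 (k : ℕ) (A : Matrix (Fin k) (Fin k) ℂ)
    (hnormal : A * Aᴴ = Aᴴ * A)
    (e : Fin k → Fin k → ℂ) (lam : Fin k → ℂ)
    (horth : ∀ i j, star (e i) ⬝ᵥ e j = if i = j then (1 : ℂ) else 0)
    (hspec : A = ∑ i, lam i • Matrix.vecMulVec (e i) (star (e i)))
    (hcontr : ∀ i, ‖lam i‖ ≤ 1)
    (ρ : Matrix (Fin k) (Fin k) ℂ) (hρ : ρ.PosSemidef) (hρtr : ρ.trace = 1) :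
    Filter.Tendsto (fun n : ℕ => (A ^ n * ρ * (Aᴴ) ^ n).trace) Filter.atTop
        (nhds (∑ i ∈ Finset.univ.filter fun i => ‖lam i‖ = 1,
          star (e i) ⬝ᵥ (ρ *ᵥ e i))) ∧
      (Filter.Tendsto (fun n : ℕ => (A ^ n * ρ * (Aᴴ) ^ n).trace) Filter.atTop (nhds 0) ↔
        ∀ i, ‖lam i‖ = 1 → star (e i) ⬝ᵥ (ρ *ᵥ e i) = 0) :=
  stmt_17_general k A e lam horth hspec hcontr ρ hρ
end
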